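/- arXiv:1612.06638 — 7 statements merged into one kernel-verified Lean document; each statement's English description precedes it below -/
import Mathlib

section
/- For every metric space X, the functions ad_X and ãd_X have the same growth type: ad_X ≈ ãd_X, where ãd_X(λ) = min{m_λ(𝒰) : 𝒰 a uniformly bounded cover of X} − 1. -/
open scoped ENNReal

namespace AsdimGrowth

variable {X : Type*}

/-- `U` is a cover of `X`. -/
def IsCover (U : Set (Set X)) : Prop := ∀ x : X, ∃ u ∈ U, x ∈ u

/-- A family of subsets is uniformly bounded if the diameters of its members
admit a common finite bound. -/
def UnifBdd (d : X → X → ℝ) (U : Set (Set X)) : Prop :=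
  ∃ R : ℝ, ∀ u ∈ U, ∀ a ∈ u, ∀ b ∈ u, d a b ≤ R

/-- The multiplicity of a family: the supremum over points `x` of the number of
members containing `x` (an extended natural number). -/
noncomputable def mult (U : Set (Set X)) : ℕ∞ :=
  ⨆ x : X, {u | u ∈ U ∧ x ∈ u}.encard

/-- `LebGT d U lam` says the Lebesgue number of `U` exceeds `lam`: there is `l > lam`
such that every subset of diameter at most `l` lies in some member of `U`. -/
def LebGT (d : X → X → ℝ) (U : Set (Set X)) (lam : ℝ) : Prop :=
  ∃ l : ℝ, lam < l ∧ ∀ A : Set X, (∀ a ∈ A, ∀ b ∈ A, d a b ≤ l) → ∃ u ∈ U, A ⊆ u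

/-- The asymptotic dimension function `ad_X(lam)`: the least multiplicity of a
uniformly bounded cover of Lebesgue number `> lam`, minus one (`∞` if there is no
such cover). -/
noncomputable def adFun (d : X → X → ℝ) (lam : ℝ) : ℕ∞ :=
  sInf {m : ℕ∞ | ∃ U : Set (Set X),
    IsCover U ∧ UnifBdd d U ∧ LebGT d U lam ∧ mult U = m} - 1

/-- The asymptotic dimension function, valued in `ℝ≥0∞`. -/
noncomputable def adFunE (d : X → X → ℝ) : ℝ → ℝ≥0∞ :=
  fun lam => (adFun d lam : ℝ≥0∞)

/-- Growth domination of functions: `f ⪯ g` iff there is `k ∈ ℕ` with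
`f(x) ≤ k·g(kx+k)+k` for all `x > k`. -/
def FDom (f g : ℝ → ℝ≥0∞) : Prop :=
  ∃ k : ℕ, ∀ x : ℝ, (k : ℝ) < x → f x ≤ k * g (k * x + k) + k

/-- Growth equivalence of functions: `f ≈ g` iff `f ⪯ g` and `g ⪯ f`. -/
def FEquiv (f g : ℝ → ℝ≥0∞) : Prop := FDom f g ∧ FDom g f

end AsdimGrowth

open AsdimGrowth

namespace AsdimGrowth

/-- The `r`-multiplicity of a family: the supremum over points `x` of the number of
members meeting the closed ball `B(x,r)`. -/
noncomputable def multR {X : Type*} (d : X → X → ℝ) (U : Set (Set X)) (r : ℝ) : ℕ∞ :=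
  ⨆ x : X, {u | u ∈ U ∧ ∃ y ∈ u, d x y ≤ r}.encard

/-- The modified asymptotic dimension function `ãd_X(lam)`: the least
`lam`-multiplicity of a uniformly bounded cover, minus one. -/
noncomputable def adTilde {X : Type*} (d : X → X → ℝ) (lam : ℝ) : ℕ∞ :=
  sInf {m : ℕ∞ | ∃ U : Set (Set X),
    IsCover U ∧ UnifBdd d U ∧ multR d U lam = m} - 1

end AsdimGrowth

/-!
Replacing each member of a cover by its closed `r`-neighbourhood turns `r`-multiplicity into
multiplicity and gives Lebesgue number `r`; conversely, replacing each member by the set of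
points whose closed `r`-ball it contains turns a Lebesgue number `> 2r` into a cover and
multiplicity into an upper bound for `r`-multiplicity. Hence `ad_X(λ) ≤ ãd_X(λ + 1)` and
`ãd_X(λ) ≤ ad_X(2λ + 2)`.
-/

namespace AsdimGrowth

open Metric

theorem encard_sep_image_le {α β : Type*} (f : α → β) (U : Set α) (p : β → Prop) :
    {v | v ∈ f '' U ∧ p v}.encard ≤ {u | u ∈ U ∧ p (f u)}.encard := by
  refine (Set.encard_le_encard ?_).trans (Set.encard_image_le f _)
  rintro _ ⟨⟨u, hu, rfl⟩, hp⟩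
  exact ⟨u, ⟨hu, hp⟩, rfl⟩

section Covers

variable {X : Type*}

theorem mult_insert_empty (U : Set (Set X)) : mult (insert ∅ U) = mult U := by
  unfold mult
  congr! 3 with x
  ext v
  simp only [Set.mem_insert_iff, Set.mem_ofPred_eq, or_and_right]
  refine or_iff_right_of_imp ?_
  rintro ⟨rfl, hx⟩
  exact absurd hx (Set.notMem_empty x)

theorem IsCover.mono {U V : Set (Set X)} (hU : IsCover U) (hUV : U ⊆ V) : IsCover V :=
  fun x => (hU x).imp fun _ ⟨hu, hx⟩ => ⟨hUV hu, hx⟩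

theorem IsCover.image_of_subset {U : Set (Set X)} {f : Set X → Set X} (hU : IsCover U)
    (hf : ∀ u ∈ U, u ⊆ f u) : IsCover (f '' U) := fun x => by
  obtain ⟨u, hu, hxu⟩ := hU x
  exact ⟨f u, Set.mem_image_of_mem f hu, hf u hu hxu⟩

theorem UnifBdd.image_of_subset {d : X → X → ℝ} {U : Set (Set X)} {f : Set X → Set X}
    (hU : UnifBdd d U) (hf : ∀ u ∈ U, f u ⊆ u) : UnifBdd d (f '' U) := by
  obtain ⟨R, hR⟩ := hU
  refine ⟨R, ?_⟩
  rintro _ ⟨u, hu, rfl⟩ a ha b hb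
  exact hR u hu a (hf u hu ha) b (hf u hu hb)

theorem UnifBdd.insert_empty {d : X → X → ℝ} {U : Set (Set X)} (hU : UnifBdd d U) :
    UnifBdd d (insert ∅ U) := by
  obtain ⟨R, hR⟩ := hU
  refine ⟨R, ?_⟩
  rintro u (rfl | hu)
  · exact fun a ha => absurd ha (Set.notMem_empty a)
  · exact hR u hu

end Covers

section PseudoMetric

variable {X : Type*} [PseudoMetricSpace X] {U : Set (Set X)} {r lam : ℝ}

/-- Unlike `Metric.cthickening`, every point of it lies within `r` of a point of `u`, which is
what `multR` counts. -/
def ballNbhd (r : ℝ) (u : Set X) : Set X := ⋃ y ∈ u, closedBall y r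

theorem mem_ballNbhd {u : Set X} {x : X} : x ∈ ballNbhd r u ↔ ∃ y ∈ u, dist x y ≤ r := by
  simp only [ballNbhd, Set.mem_iUnion₂, mem_closedBall, exists_prop]

theorem subset_ballNbhd (hr : 0 ≤ r) (u : Set X) : u ⊆ ballNbhd r u := fun x hx =>
  mem_ballNbhd.2 ⟨x, hx, by rwa [dist_self]⟩

theorem UnifBdd.image_ballNbhd (hU : UnifBdd dist U) : UnifBdd dist (ballNbhd r '' U) := by
  obtain ⟨R, hR⟩ := hU
  refine ⟨R + 2 * r, ?_⟩
  rintro _ ⟨u, hu, rfl⟩ a ha b hb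
  obtain ⟨y, hy, hay⟩ := mem_ballNbhd.1 ha
  obtain ⟨z, hz, hbz⟩ := mem_ballNbhd.1 hb
  calc dist a b ≤ dist a y + dist y z + dist z b := dist_triangle4 a y z b
    _ ≤ r + R + r := by gcongr; exacts [hR u hu y hy z hz, dist_comm b z ▸ hbz]
    _ = R + 2 * r := by ring

/-- The empty set is added so that the empty subset of `X` is also covered when `X = ∅`. -/
theorem lebGT_insert_empty_image_ballNbhd (hU : IsCover U) (hlam : lam < r) :
    LebGT dist (insert ∅ (ballNbhd r '' U)) lam := by
  refine ⟨r, hlam, fun A hA => ?_⟩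
  rcases A.eq_empty_or_nonempty with rfl | ⟨a, ha⟩
  · exact ⟨∅, Set.mem_insert _ _, subset_rfl⟩
  obtain ⟨u, hu, hau⟩ := hU a
  exact ⟨ballNbhd r u, Set.mem_insert_of_mem _ ⟨u, hu, rfl⟩,
    fun b hb => mem_ballNbhd.2 ⟨a, hau, hA b hb a ha⟩⟩

theorem mult_image_ballNbhd_le (U : Set (Set X)) (r : ℝ) :
    mult (ballNbhd r '' U) ≤ multR dist U r :=
  iSup_mono fun x => by
    simpa only [mem_ballNbhd] using encard_sep_image_le (ballNbhd r) U (x ∈ ·)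

def ballCore (r : ℝ) (u : Set X) : Set X := {z | closedBall z r ⊆ u}

theorem ballCore_subset (hr : 0 ≤ r) (u : Set X) : ballCore r u ⊆ u := fun _ hz =>
  hz (mem_closedBall_self hr)

theorem isCover_image_ballCore (hU : LebGT dist U lam) (hr : 2 * r ≤ lam) :
    IsCover (ballCore r '' U) := fun z => by
  obtain ⟨l, hl, hLeb⟩ := hU
  obtain ⟨u, hu, hsub⟩ := hLeb (closedBall z r) fun a ha b hb =>
    (dist_triangle_right a b z).trans <| by
      linarith [mem_closedBall.1 ha, mem_closedBall.1 hb]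
  exact ⟨ballCore r u, ⟨u, hu, rfl⟩, hsub⟩

theorem multR_image_ballCore_le (U : Set (Set X)) (r : ℝ) :
    multR dist (ballCore r '' U) r ≤ mult U :=
  iSup_mono fun x => (encard_sep_image_le (ballCore r) U _).trans <|
    Set.encard_le_encard fun _ ⟨hu, y, hy, hxy⟩ =>
      ⟨hu, hy (mem_closedBall.2 (dist_comm y x ▸ hxy))⟩

theorem adFun_le_adTilde (hr : 0 ≤ r) (hlam : lam < r) :
    adFun (fun a b : X => dist a b) lam ≤ adTilde (fun a b : X => dist a b) r := by
  refine tsub_le_tsub_right (sInf_le_sInf_of_isCoinitialFor ?_) 1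
  rintro _ ⟨U, hcov, hbdd, rfl⟩
  refine ⟨_, ⟨insert ∅ (ballNbhd r '' U), ?_, ?_, lebGT_insert_empty_image_ballNbhd hcov hlam,
    rfl⟩, (mult_insert_empty _).trans_le (mult_image_ballNbhd_le U r)⟩
  · exact (hcov.image_of_subset fun u _ => subset_ballNbhd hr u).mono (Set.subset_insert _ _)
  · exact hbdd.image_ballNbhd.insert_empty

theorem adTilde_le_adFun (hr : 0 ≤ r) (hlam : 2 * r ≤ lam) :
    adTilde (fun a b : X => dist a b) r ≤ adFun (fun a b : X => dist a b) lam := by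
  refine tsub_le_tsub_right (sInf_le_sInf_of_isCoinitialFor ?_) 1
  rintro _ ⟨U, -, hbdd, hLeb, rfl⟩
  exact ⟨_, ⟨ballCore r '' U, isCover_image_ballCore hLeb hlam,
    hbdd.image_of_subset fun u _ => ballCore_subset hr u, rfl⟩, multR_image_ballCore_le U r⟩

end PseudoMetric

theorem fDom_of_le_comp {f g : ℝ → ℝ≥0∞} (k : ℕ) (hk : k ≠ 0)
    (h : ∀ x : ℝ, k < x → f x ≤ g (k * x + k)) : FDom f g :=
  ⟨k, fun x hx => (h x hx).trans <| le_add_right <|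
    le_mul_of_one_le_left' (by exact_mod_cast Nat.one_le_iff_ne_zero.2 hk)⟩

end AsdimGrowth

/-- For every metric space `X`, the asymptotic dimension function
`ad_X` and the modified function `ãd_X` have the same growth type. -/
theorem adFun_equiv_adTilde {X : Type*} [MetricSpace X] :
    FEquiv (adFunE (fun a b : X => dist a b))
      (fun lam => (adTilde (fun a b : X => dist a b) lam : ℝ≥0∞)) := by
  refine ⟨fDom_of_le_comp 1 one_ne_zero fun x hx => ?_,
    fDom_of_le_comp 2 two_ne_zero fun x hx => ?_⟩ <;> push_cast at hx ⊢
  · exact ENat.toENNReal_le.2 (adFun_le_adTilde (by linarith) (by linarith))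
  · exact ENat.toENNReal_le.2 (adTilde_le_adFun (by linarith) (by linarith))
end

section
/- Let V be the vertex set of a median graph. Then the normal distance d_nor is a metric on V: for all x,y,z ∈ V one has d_nor(x,y) = 0 if and only if x = y, d_nor(x,y) = d_nor(y,x), and d_nor(x,z) ≤ d_nor(x,y) + d_nor(y,z). -/
open scoped ENNReal

namespace MedianGraph

variable {V : Type*}

/-- The metric interval `[x,y]` in a graph with respect to the edge-path metric. -/
def itv (G : SimpleGraph V) (x y : V) : Set V :=
  {z | G.dist x z + G.dist z y = G.dist x y}

/-- A subset of the vertex set is convex if it contains every interval between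
two of its points. -/
def Cvx (G : SimpleGraph V) (S : Set V) : Prop :=
  ∀ a ∈ S, ∀ b ∈ S, itv G a b ⊆ S

/-- A median graph: a connected graph in which every triple of vertices has a
unique median. -/
def IsMedianGraph (G : SimpleGraph V) : Prop :=
  G.Connected ∧ ∀ x y z : V, ∃! m : V,
    m ∈ itv G x y ∧ m ∈ itv G y z ∧ m ∈ itv G z x

/-- A halfspace: a subset which is nonempty, proper, convex with convex complement. -/
def IsHalfspace (G : SimpleGraph V) (h : Set V) : Prop :=
  h.Nonempty ∧ hᶜ.Nonempty ∧ Cvx G h ∧ Cvx G hᶜ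

/-- `Hset G x y` is the set of halfspaces containing `x` but not `y`. -/
def Hset (G : SimpleGraph V) (x y : V) : Set (Set V) :=
  {h | IsHalfspace G h ∧ x ∈ h ∧ y ∉ h}

/-- The normal distance `d_nor(x,y)`: the maximum cardinality of a chain (under
inclusion) in `Hset G x y`. -/
noncomputable def dnor (G : SimpleGraph V) (x y : V) : ℕ :=
  sSup {n : ℕ | ∃ c : Set (Set V), c ⊆ Hset G x y ∧ IsChain (· ⊆ ·) c ∧ c.encard = n}

/-- Two halfspaces cross if all four intersections of them and their
complements are nonempty. -/
def Crosses (h k : Set V) : Prop :=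
  (h ∩ k).Nonempty ∧ (h ∩ kᶜ).Nonempty ∧ (hᶜ ∩ k).Nonempty ∧ (hᶜ ∩ kᶜ).Nonempty

/-- `Hn G x₀ x n`: the halfspaces `h` in `Hset G x₀ x` such that the maximum
cardinality of a chain in `{k ∈ H(x₀,x) : k ⊆ h}` equals `n`. -/
noncomputable def Hn (G : SimpleGraph V) (x₀ x : V) (n : ℕ) : Set (Set V) :=
  {h | h ∈ Hset G x₀ x ∧
    sSup {m : ℕ | ∃ c : Set (Set V), c ⊆ {k | k ∈ Hset G x₀ x ∧ k ⊆ h} ∧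
      IsChain (· ⊆ ·) c ∧ c.encard = m} = n}

/-- `Fh G x₀ x n h = {w ∈ [x₀,x] ∩ S_nor(x₀,n) : w ∉ h}`. -/
def Fh (G : SimpleGraph V) (x₀ x : V) (n : ℕ) (h : Set V) : Set V :=
  {w | w ∈ itv G x₀ x ∧ dnor G x₀ w = n ∧ w ∉ h}

/-- The graph has dimension at most `η` if every family of pairwise crossing
halfspaces has cardinality at most `η`. -/
def DimLE (G : SimpleGraph V) (η : ℕ) : Prop :=
  ∀ F : Set (Set V), (∀ h ∈ F, IsHalfspace G h) →
    (∀ h ∈ F, ∀ k ∈ F, h ≠ k → Crosses h k) → F.encard ≤ η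

variable {G : SimpleGraph V}

lemma itv_mem {x y z : V} : z ∈ itv G x y ↔ G.dist x z + G.dist z y = G.dist x y := Iff.rfl

lemma median_spec (hG : IsMedianGraph G) (x y z : V) :
    ∃ m : V, m ∈ itv G x y ∧ m ∈ itv G y z ∧ m ∈ itv G z x :=
  (hG.2 x y z).exists

lemma median_eq (hG : IsMedianGraph G) {x y z m m' : V}
    (h : m ∈ itv G x y ∧ m ∈ itv G y z ∧ m ∈ itv G z x)
    (h' : m' ∈ itv G x y ∧ m' ∈ itv G y z ∧ m' ∈ itv G z x) : m = m' := by
  obtain ⟨u, hu, hun⟩ := hG.2 x y z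
  rw [hun m h, hun m' h']

/-- no ties: every vertex is strictly closer to one endpoint of an edge -/
lemma dichotomy (hG : IsMedianGraph G) {a b : V} (hab : G.Adj a b) (w : V) :
    G.dist w b = G.dist w a + 1 ∨ G.dist w a = G.dist w b + 1 := by
  obtain ⟨m, h1, h2, h3⟩ := median_spec hG w a b
  have hab1 : G.dist a b = 1 := SimpleGraph.dist_eq_one_iff_adj.mpr hab
  have h2' : G.dist a m + G.dist m b = 1 := by rw [itv_mem] at h2; omega
  have hz : G.dist a m = 0 ∨ G.dist m b = 0 := by omega
  rcases hz with hz | hz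
  · left
    have hma : a = m := (hG.1.dist_eq_zero_iff).mp hz
    rw [itv_mem, ← hma] at h3
    have := G.dist_comm (u := b) (v := a)
    have := G.dist_comm (u := b) (v := w)
    have := G.dist_comm (u := a) (v := w)
    omega
  · right
    have hmb : m = b := (hG.1.dist_eq_zero_iff).mp hz
    rw [itv_mem, hmb] at h1
    have := G.dist_comm (u := a) (v := b)
    omega

lemma no_triangle (hG : IsMedianGraph G) {x y z : V}
    (h1 : G.dist x y = 1) (h2 : G.dist y z = 1) (h3 : G.dist z x = 1) : False := by
  obtain ⟨m, hm1, hm2, hm3⟩ := median_spec hG x y z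
  rw [itv_mem] at hm1 hm2 hm3
  have c1 := G.dist_comm (u := x) (v := m)
  have c2 := G.dist_comm (u := y) (v := m)
  have c3 := G.dist_comm (u := z) (v := m)
  have hz : G.dist x m = 0 ∨ G.dist m y = 0 := by omega
  rcases hz with hz | hz
  · have : x = m := (hG.1.dist_eq_zero_iff).mp hz
    subst this; omega
  · have : m = y := (hG.1.dist_eq_zero_iff).mp hz
    subst this; omega

/-- Core convexity lemma for the halfspace determined by an edge `(a,b)`:
there is no `z ∈ [u,v]` on the `b`-side with `u, v` on the `a`-side. -/
lemma key (hG : IsMedianGraph G) {a b : V} (hab : G.Adj a b) :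
    ∀ β N u v z, G.dist z b = β → G.dist u z + G.dist z v = N →
      G.dist u b = G.dist u a + 1 → G.dist v b = G.dist v a + 1 →
      G.dist u z + G.dist z v = G.dist u v → G.dist z a = G.dist z b + 1 → False := by
  have hconn := hG.1
  intro β
  induction β using Nat.strong_induction_on with
  | _ β ihβ =>
  intro N
  induction N using Nat.strong_induction_on with
  | _ N ihN =>
  intro u v z dzb hN hu hv hzuv hz
  -- z is distinct from u and v
  have hzu : G.dist u z ≠ 0 := by
    intro h0
    have he : u = z := hconn.dist_eq_zero_iff.mp h0
    rw [he] at hu; omega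
  have hzv : G.dist z v ≠ 0 := by
    intro h0
    have he : z = v := hconn.dist_eq_zero_iff.mp h0
    rw [← he] at hv; omega
  -- Step 1/2: z lies between each endpoint and b
  have claim1 : ∀ p q : V, G.dist p z + G.dist z q = G.dist p q →
      G.dist p b = G.dist p a + 1 → G.dist q b = G.dist q a + 1 →
      G.dist p z + G.dist z b = G.dist p b := by
    intro p q hpq hp hq
    obtain ⟨m, hm1, hm2, hm3⟩ := median_spec hG p z b
    rw [itv_mem] at hm1 hm2 hm3
    rcases dichotomy hG hab m with hmh | hmh
    · exfalso
      have t1 : G.dist z a ≤ G.dist z m + G.dist m a := hconn.dist_triangle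
      omega
    · by_cases hmz : m = z
      · rw [hmz] at hm3
        have c1 := G.dist_comm (u := b) (v := z)
        have c2 := G.dist_comm (u := b) (v := p)
        have c3 := G.dist_comm (u := z) (v := p)
        omega
      · exfalso
        have hdzm : G.dist z m ≠ 0 := fun h0 => hmz ((hconn.dist_eq_zero_iff.mp h0).symm)
        have t1 : G.dist m q ≤ G.dist m z + G.dist z q := hconn.dist_triangle
        have t2 : G.dist p q ≤ G.dist p m + G.dist m q := hconn.dist_triangle
        have c1 := G.dist_comm (u := m) (v := z)
        have hmq : G.dist p m + G.dist m q = G.dist p q := by omega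
        exact ihβ (G.dist m b) (by omega) (G.dist p m + G.dist m q) p q m rfl rfl
          hp hq hmq (by omega)
  have zub : G.dist u z + G.dist z b = G.dist u b := claim1 u v hzuv hu hv
  have zvb : G.dist v z + G.dist z b = G.dist v b := by
    have c1 := G.dist_comm (u := u) (v := z)
    have c2 := G.dist_comm (u := z) (v := v)
    have c3 := G.dist_comm (u := u) (v := v)
    exact claim1 v u (by omega) hv hu
  by_cases h2u : 2 ≤ G.dist u z
  · -- measure descent on the u side
    obtain ⟨m, hm1, hm2, hm3⟩ := median_spec hG a u z
    rw [itv_mem] at hm1 hm2 hm3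
    have c1 := G.dist_comm (u := a) (v := z)
    have c2 := G.dist_comm (u := a) (v := u)
    have c3 := G.dist_comm (u := z) (v := u)
    have c4 := G.dist_comm (u := z) (v := m)
    have hmz : m ≠ z := by
      intro h; rw [h] at hm1; omega
    have hdzm : G.dist z m ≠ 0 := fun h0 => hmz ((hconn.dist_eq_zero_iff.mp h0).symm)
    rcases dichotomy hG hab m with hmh | hmh
    · -- m on the a side, adjacent to z; recurse with smaller measure
      have t1 : G.dist m b ≤ G.dist m z + G.dist z b := hconn.dist_triangle
      have t2 : G.dist u b ≤ G.dist u m + G.dist m b := hconn.dist_triangle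
      have hmb : G.dist m b = G.dist m z + G.dist z b := by omega
      have hmz1 : G.dist m z = 1 := by omega
      have t3 : G.dist m v ≤ G.dist m z + G.dist z v := hconn.dist_triangle
      have t4 : G.dist u v ≤ G.dist u m + G.dist m v := hconn.dist_triangle
      have hmv : G.dist m z + G.dist z v = G.dist m v := by omega
      exact ihN (G.dist m z + G.dist z v) (by omega) m v z dzb rfl hmh hv hmv hz
    · -- m strictly between z and a but on the b side: β decreases
      have t3 : G.dist m v ≤ G.dist m z + G.dist z v := hconn.dist_triangle
      have t4 : G.dist u v ≤ G.dist u m + G.dist m v := hconn.dist_triangle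
      have hmv : G.dist u m + G.dist m v = G.dist u v := by omega
      have t5 : G.dist m b ≤ G.dist m z + G.dist z b := hconn.dist_triangle
      exact ihβ (G.dist m b) (by omega) (G.dist u m + G.dist m v) u v m rfl rfl
        hu hv hmv (by omega)
  · by_cases h2v : 2 ≤ G.dist z v
    · -- measure descent on the v side
      obtain ⟨m, hm1, hm2, hm3⟩ := median_spec hG a v z
      rw [itv_mem] at hm1 hm2 hm3
      have c1 := G.dist_comm (u := a) (v := z)
      have c2 := G.dist_comm (u := a) (v := v)
      have c3 := G.dist_comm (u := z) (v := v)
      have c4 := G.dist_comm (u := z) (v := m)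
      have hmz : m ≠ z := by
        intro h; rw [h] at hm1; omega
      have hdzm : G.dist z m ≠ 0 := fun h0 => hmz ((hconn.dist_eq_zero_iff.mp h0).symm)
      rcases dichotomy hG hab m with hmh | hmh
      · have t1 : G.dist m b ≤ G.dist m z + G.dist z b := hconn.dist_triangle
        have t2 : G.dist v b ≤ G.dist v m + G.dist m b := hconn.dist_triangle
        have hmb : G.dist m b = G.dist m z + G.dist z b := by omega
        have hmz1 : G.dist m z = 1 := by omega
        have t3 : G.dist u m ≤ G.dist u z + G.dist z m := hconn.dist_triangle
        have t4 : G.dist u v ≤ G.dist u m + G.dist m v := hconn.dist_triangle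
        have c5 := G.dist_comm (u := m) (v := v)
        have hmv : G.dist u z + G.dist z m = G.dist u m := by omega
        exact ihN (G.dist u z + G.dist z m) (by omega) u m z dzb rfl hu hmh hmv hz
      · have t3 : G.dist u m ≤ G.dist u z + G.dist z m := hconn.dist_triangle
        have t4 : G.dist u v ≤ G.dist u m + G.dist m v := hconn.dist_triangle
        have c5 := G.dist_comm (u := m) (v := v)
        have hmv : G.dist u m + G.dist m v = G.dist u v := by omega
        have t5 : G.dist m b ≤ G.dist m z + G.dist z b := hconn.dist_triangle
        exact ihβ (G.dist m b) (by omega) (G.dist u m + G.dist m v) u v m rfl rfl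
          hu hv hmv (by omega)
    · -- Step 4: u, v are the two neighbours of z, d(u,v) = 2
      have du1 : G.dist u z = 1 := by omega
      have dv1 : G.dist z v = 1 := by omega
      have duv : G.dist u v = 2 := by omega
      have dub : G.dist u b = β + 1 := by omega
      have dua : G.dist u a = β := by omega
      have dvb : G.dist v b = β + 1 := by
        have c := G.dist_comm (u := v) (v := z); omega
      have dva : G.dist v a = β := by omega
      have hβ : 1 ≤ β := by
        by_contra hβ
        have hua : u = a := hconn.dist_eq_zero_iff.mp (by omega)
        have hva : v = a := hconn.dist_eq_zero_iff.mp (by omega)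
        rw [hua, hva] at duv
        rw [SimpleGraph.dist_self] at duv
        omega
      obtain ⟨m', e1, e2, e3⟩ := median_spec hG u v a
      rw [itv_mem] at e1 e2 e3
      have c1 := G.dist_comm (u := u) (v := m')
      have c2 := G.dist_comm (u := v) (v := m')
      have c3 := G.dist_comm (u := a) (v := m')
      have c4 := G.dist_comm (u := a) (v := u)
      have dum : G.dist u m' = 1 := by omega
      have dmv : G.dist m' v = 1 := by omega
      have dma : G.dist m' a = β - 1 := by omega
      rcases dichotomy hG hab m' with hm'h | hm'h
      swap
      · -- m' outside h : β decreases by two (or immediate contradiction)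
        by_cases hβ2 : 2 ≤ β
        · exact ihβ (G.dist m' b) (by omega) (G.dist u m' + G.dist m' v) u v m' rfl rfl
            hu hv (by omega) hm'h
        · omega
      · have dmb : G.dist m' b = β := by omega
        have hzm' : z ≠ m' := by
          intro h; rw [h] at hz dzb; omega
        have dzm2 : G.dist z m' = 2 := by
          have t1 : G.dist z m' ≤ G.dist z u + G.dist u m' := hconn.dist_triangle
          have c5 := G.dist_comm (u := z) (v := u)
          have hne0 : G.dist z m' ≠ 0 := fun h0 => hzm' (hconn.dist_eq_zero_iff.mp h0)
          have hne1 : G.dist z m' ≠ 1 := by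
            intro h1
            exact no_triangle hG (show G.dist z u = 1 by omega) dum
              (by have := G.dist_comm (u := m') (v := z); omega)
          omega
        obtain ⟨m'', f1, f2, f3⟩ := median_spec hG z m' b
        rw [itv_mem] at f1 f2 f3
        have g1 := G.dist_comm (u := z) (v := m'')
        have g2 := G.dist_comm (u := m') (v := m'')
        have g3 := G.dist_comm (u := b) (v := m'')
        have g4 := G.dist_comm (u := b) (v := z)
        have dzm'' : G.dist z m'' = 1 := by omega
        have dmm'' : G.dist m'' m' = 1 := by omega
        have dm''b : G.dist m'' b = β - 1 := by omega
        have dum'' : G.dist u m'' = 2 := by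
          have t1 : G.dist u m'' ≤ G.dist u z + G.dist z m'' := hconn.dist_triangle
          have hne0 : G.dist u m'' ≠ 0 := by
            intro h0
            have he : u = m'' := hconn.dist_eq_zero_iff.mp h0
            rw [he] at dub; omega
          have hne1 : G.dist u m'' ≠ 1 := by
            intro h1
            exact no_triangle hG du1 dzm''
              (by have := G.dist_comm (u := m'') (v := u); omega)
          omega
        have dvm'' : G.dist v m'' = 2 := by
          have c5 := G.dist_comm (u := v) (v := z)
          have t1 : G.dist v m'' ≤ G.dist v z + G.dist z m'' := hconn.dist_triangle
          have hne0 : G.dist v m'' ≠ 0 := by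
            intro h0
            have he : v = m'' := hconn.dist_eq_zero_iff.mp h0
            rw [he] at dvb; omega
          have hne1 : G.dist v m'' ≠ 1 := by
            intro h1
            exact no_triangle hG (show G.dist v z = 1 by omega) dzm''
              (by have := G.dist_comm (u := m'') (v := v); omega)
          omega
        -- both z and m' are medians of (u, v, m'')
        have hmedz : z ∈ itv G u v ∧ z ∈ itv G v m'' ∧ z ∈ itv G m'' u := by
          have c5 := G.dist_comm (u := v) (v := z)
          have c6 := G.dist_comm (u := m'') (v := z)
          have c7 := G.dist_comm (u := z) (v := u)
          have c8 := G.dist_comm (u := m'') (v := u)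
          exact ⟨itv_mem.mpr (by omega), itv_mem.mpr (by omega), itv_mem.mpr (by omega)⟩
        have hmedm : m' ∈ itv G u v ∧ m' ∈ itv G v m'' ∧ m' ∈ itv G m'' u := by
          have c5 := G.dist_comm (u := m'') (v := m')
          have c6 := G.dist_comm (u := m') (v := u)
          have c7 := G.dist_comm (u := m'') (v := u)
          exact ⟨itv_mem.mpr (by omega), itv_mem.mpr (by omega), itv_mem.mpr (by omega)⟩
        have : z = m' := median_eq hG hmedz hmedm
        rw [this] at hz dzb
        omega

/-- The halfspace determined by an edge `(a,b)` (the `a`-side). -/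
lemma edge_halfspace (hG : IsMedianGraph G) {a b : V} (hab : G.Adj a b) :
    IsHalfspace G {w | G.dist w b = G.dist w a + 1} := by
  have hconn := hG.1
  have hdab : G.dist a b = 1 := SimpleGraph.dist_eq_one_iff_adj.mpr hab
  have hdba : G.dist b a = 1 := by rw [G.dist_comm]; exact hdab
  have hcompl : {w : V | G.dist w b = G.dist w a + 1}ᶜ =
      {w | G.dist w a = G.dist w b + 1} := by
    ext w
    simp only [Set.mem_compl_iff, Set.mem_setOf_eq]
    rcases dichotomy hG hab w with h | h <;> constructor <;> intro h' <;> omega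
  have cvx1 : ∀ {a' b' : V}, G.Adj a' b' →
      Cvx G {w | G.dist w b' = G.dist w a' + 1} := by
    intro a' b' hab'
    intro p hp q hq z hz
    simp only [Set.mem_setOf_eq] at hp hq ⊢
    rw [itv_mem] at hz
    rcases dichotomy hG hab' z with h | h
    · exact h
    · exact absurd (key hG hab' (G.dist z b') (G.dist p z + G.dist z q) p q z rfl rfl
        hp hq hz h) (by simp)
  refine ⟨⟨a, ?_⟩, ⟨b, ?_⟩, cvx1 hab, ?_⟩
  · simp only [Set.mem_setOf_eq, SimpleGraph.dist_self]; omega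
  · rw [hcompl]; simp only [Set.mem_setOf_eq, SimpleGraph.dist_self]; omega
  · rw [hcompl]; exact cvx1 hab.symm

/-- Separation: distinct vertices are separated by some halfspace. -/
lemma exists_sep (hG : IsMedianGraph G) {x y : V} (hxy : x ≠ y) :
    ∃ h : Set V, IsHalfspace G h ∧ x ∈ h ∧ y ∉ h := by
  have hconn := hG.1
  have hd0 : G.dist x y ≠ 0 :=
    SimpleGraph.dist_ne_zero_iff_ne_and_reachable.mpr ⟨hxy, hconn x y⟩
  obtain ⟨p, hp⟩ := SimpleGraph.exists_walk_of_dist_ne_zero hd0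
  cases p with
  | nil => exact absurd hxy (by simp)
  | cons hadj q =>
    rename_i w
    have hxw : G.dist x w = 1 := SimpleGraph.dist_eq_one_iff_adj.mpr hadj
    have hq : G.dist w y ≤ q.length := SimpleGraph.dist_le q
    have hlen : q.length + 1 = G.dist x y := by
      simpa [SimpleGraph.Walk.length_cons] using hp
    have htri : G.dist x y ≤ G.dist x w + G.dist w y := hconn.dist_triangle
    have hwy : G.dist w y = G.dist x y - 1 := by omega
    refine ⟨{v | G.dist v w = G.dist v x + 1}, edge_halfspace hG hadj, ?_, ?_⟩
    · simp only [Set.mem_setOf_eq, SimpleGraph.dist_self]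
      omega
    · simp only [Set.mem_setOf_eq]
      have c1 := G.dist_comm (u := y) (v := w)
      have c2 := G.dist_comm (u := y) (v := x)
      omega

lemma dist_getVert_le (hconn : G.Connected) :
    ∀ {x y : V} (p : G.Walk x y) (i : ℕ), G.dist x (p.getVert i) ≤ i := by
  intro x y p
  induction p with
  | nil =>
    intro i
    rw [SimpleGraph.Walk.getVert_of_length_le _ (by simp : (SimpleGraph.Walk.nil).length ≤ i)]
    simp [SimpleGraph.dist_self]
  | @cons u v w hadj q ih =>
    intro i
    cases i with
    | zero => simp [SimpleGraph.dist_self]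
    | succ j =>
      rw [SimpleGraph.Walk.getVert_cons_succ]
      have t : G.dist u (q.getVert j) ≤ G.dist u v + G.dist v (q.getVert j) :=
        hconn.dist_triangle
      have h1 : G.dist u v = 1 := SimpleGraph.dist_eq_one_iff_adj.mpr hadj
      have := ih j
      omega

lemma dist_getVert_to_end (hconn : G.Connected) :
    ∀ {x y : V} (p : G.Walk x y) (i : ℕ), G.dist (p.getVert i) y ≤ p.length - i := by
  intro x y p
  induction p with
  | nil =>
    intro i
    rw [SimpleGraph.Walk.getVert_of_length_le _ (by simp : (SimpleGraph.Walk.nil).length ≤ i)]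
    simp [SimpleGraph.dist_self]
  | @cons u v w hadj q ih =>
    intro i
    cases i with
    | zero =>
      simpa using SimpleGraph.dist_le (SimpleGraph.Walk.cons hadj q)
    | succ j =>
      rw [SimpleGraph.Walk.getVert_cons_succ]
      simpa [SimpleGraph.Walk.length_cons] using ih j

/-- Chains of halfspaces separating `x` from `y` have at most `dist x y` elements. -/
lemma chain_bound (hG : IsMedianGraph G) {x y : V} {c : Set (Set V)}
    (hc : c ⊆ Hset G x y) (hchain : IsChain (· ⊆ ·) c) :
    c.encard ≤ (G.dist x y : ℕ∞) := by
  classical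
  have hconn := hG.1
  by_cases hxy : x = y
  · have hce : c = ∅ := by
      ext h
      simp only [Set.mem_empty_iff_false, iff_false]
      intro hh
      obtain ⟨_, hxh, hyh⟩ := hc hh
      rw [hxy] at hxh
      exact hyh hxh
    simp [hce]
  · set n := G.dist x y with hn
    have hd0 : G.dist x y ≠ 0 :=
      SimpleGraph.dist_ne_zero_iff_ne_and_reachable.mpr ⟨hxy, hconn x y⟩
    obtain ⟨p, hp⟩ := SimpleGraph.exists_walk_of_dist_ne_zero hd0
    have hvd : ∀ i ≤ n, G.dist x (p.getVert i) = i ∧ G.dist (p.getVert i) y = n - i := by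
      intro i hi
      have h1 := dist_getVert_le hconn p i
      have h2 := dist_getVert_to_end hconn p i
      rw [hp] at h2
      have h3 : G.dist x y ≤ G.dist x (p.getVert i) + G.dist (p.getVert i) y :=
        hconn.dist_triangle
      constructor <;> omega
    set t : Set V → ℕ := fun h => sInf {i | p.getVert i ∉ h} with ht
    have key_t : ∀ h ∈ c, 1 ≤ t h ∧ t h ≤ n ∧ p.getVert (t h) ∉ h ∧
        p.getVert (t h - 1) ∈ h := by
      intro h hh
      obtain ⟨hhs, hxh, hyh⟩ := hc hh
      have hyn : p.getVert n ∉ h := by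
        rw [hn, ← hp, p.getVert_length]
        exact hyh
      have hne : {i | p.getVert i ∉ h}.Nonempty := ⟨n, hyn⟩
      have hmem : p.getVert (t h) ∉ h := Nat.sInf_mem hne
      have h0 : p.getVert 0 ∈ h := by rw [p.getVert_zero]; exact hxh
      have ht1 : 1 ≤ t h := by
        rcases Nat.eq_zero_or_pos (t h) with h0' | h0'
        · rw [h0'] at hmem; exact absurd h0 hmem
        · exact h0'
      have htn : t h ≤ n := Nat.sInf_le hyn
      have hprev : p.getVert (t h - 1) ∈ h := by
        by_contra hcon
        have h5 : t h ≤ t h - 1 :=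
          Nat.sInf_le (show t h - 1 ∈ {i | p.getVert i ∉ h} from hcon)
        omega
      exact ⟨ht1, htn, hmem, hprev⟩
    have main : ∀ h ∈ c, ∀ k ∈ c, h ⊆ k → t h = t k → h = k := by
      intro h hh k hk hsub hteq
      by_contra hne
      obtain ⟨w, hwk, hwh⟩ := Set.exists_of_ssubset (hsub.ssubset_of_ne hne)
      obtain ⟨h1h, h2h, h3h, h4h⟩ := key_t h hh
      obtain ⟨h1k, h2k, h3k, h4k⟩ := key_t k hk
      rw [← hteq] at h3k h4k
      set s := t h with hs
      have hadj : G.Adj (p.getVert (s - 1)) (p.getVert s) := by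
        have : G.Adj (p.getVert (s - 1)) (p.getVert (s - 1 + 1)) :=
          p.adj_getVert_succ (by omega)
        rwa [show s - 1 + 1 = s by omega] at this
      have hPQ : G.dist (p.getVert (s - 1)) (p.getVert s) = 1 :=
        SimpleGraph.dist_eq_one_iff_adj.mpr hadj
      obtain ⟨m, hm1, hm2, hm3⟩ := median_spec hG (p.getVert (s - 1)) (p.getVert s) w
      have hm1' := itv_mem.mp hm1
      rw [hPQ] at hm1'
      have hz : G.dist (p.getVert (s - 1)) m = 0 ∨ G.dist m (p.getVert s) = 0 := by omega
      obtain ⟨hhs, hxh, hyh⟩ := hc hh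
      obtain ⟨hks, hxk, hyk⟩ := hc hk
      rcases hz with hz | hz
      · -- m = P; P between Q and w, both outside h, but P ∈ h
        have hmP : p.getVert (s - 1) = m := hconn.dist_eq_zero_iff.mp hz
        rw [← hmP] at hm2
        exact (hhs.2.2.2 (p.getVert s) h3h w hwh hm2) h4h
      · -- m = Q; Q between w and P, both in k, but Q ∉ k
        have hmQ : m = p.getVert s := hconn.dist_eq_zero_iff.mp hz
        rw [hmQ] at hm3
        exact h3k (hks.2.2.1 w hwk (p.getVert (s - 1)) h4k hm3)
    have hinj : Set.InjOn t c := by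
      intro h hh k hk hteq
      by_contra hne
      rcases hchain hh hk hne with hsub | hsub
      · exact hne (main h hh k hk hsub hteq)
      · exact hne (main k hk h hh hsub hteq.symm).symm
    have himg : t '' c ⊆ Set.Icc 1 n := by
      rintro i ⟨h, hh, rfl⟩
      obtain ⟨h1, h2, _, _⟩ := key_t h hh
      exact ⟨h1, h2⟩
    calc c.encard = (t '' c).encard := (hinj.encard_image).symm
      _ ≤ (Set.Icc 1 n).encard := Set.encard_le_encard himg
      _ = n := by
        rw [← Finset.coe_Icc, Set.encard_coe_eq_coe_finsetCard, Nat.card_Icc]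
        simp

/-- The set of chain-cardinalities defining `dnor`. -/
lemma zero_mem_chainSet (x y : V) :
    0 ∈ {n : ℕ | ∃ c : Set (Set V), c ⊆ Hset G x y ∧ IsChain (· ⊆ ·) c ∧ c.encard = n} :=
  ⟨∅, Set.empty_subset _, Set.pairwise_empty _, by simp⟩

lemma chainSet_bddAbove (hG : IsMedianGraph G) (x y : V) :
    BddAbove {n : ℕ | ∃ c : Set (Set V), c ⊆ Hset G x y ∧ IsChain (· ⊆ ·) c ∧ c.encard = n} := by
  refine ⟨G.dist x y, ?_⟩
  rintro n ⟨c, h1, h2, h3⟩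
  have := chain_bound hG h1 h2
  rw [h3] at this
  exact_mod_cast this

lemma le_dnor (hG : IsMedianGraph G) {x y : V} {n : ℕ}
    (hn : n ∈ {n : ℕ | ∃ c : Set (Set V), c ⊆ Hset G x y ∧ IsChain (· ⊆ ·) c ∧ c.encard = n}) :
    n ≤ dnor G x y :=
  le_csSup (chainSet_bddAbove hG x y) hn

lemma dnor_mem (hG : IsMedianGraph G) (x y : V) :
    dnor G x y ∈
      {n : ℕ | ∃ c : Set (Set V), c ⊆ Hset G x y ∧ IsChain (· ⊆ ·) c ∧ c.encard = n} :=
  Nat.sSup_mem ⟨0, zero_mem_chainSet x y⟩ (chainSet_bddAbove hG x y)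

lemma compl_mem_Hset {x y : V} {h : Set V} (hh : h ∈ Hset G x y) : hᶜ ∈ Hset G y x := by
  obtain ⟨⟨hne, hcne, hcv, hccv⟩, hxh, hyh⟩ := hh
  exact ⟨⟨hcne, by rwa [compl_compl], hccv, by rwa [compl_compl]⟩, hyh,
    fun hx => hx hxh⟩

lemma chainSet_symm (x y : V) :
    {n : ℕ | ∃ c : Set (Set V), c ⊆ Hset G x y ∧ IsChain (· ⊆ ·) c ∧ c.encard = n} ⊆
    {n : ℕ | ∃ c : Set (Set V), c ⊆ Hset G y x ∧ IsChain (· ⊆ ·) c ∧ c.encard = n} := by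
  rintro n ⟨c, hsub, hch, hcard⟩
  refine ⟨compl '' c, ?_, ?_, ?_⟩
  · rintro _ ⟨h, hh, rfl⟩
    exact compl_mem_Hset (hsub hh)
  · rintro _ ⟨s, hs, rfl⟩ _ ⟨t, ht, rfl⟩ hne
    have hst : s ≠ t := fun he => hne (by rw [he])
    rcases hch hs ht hst with h | h
    · exact Or.inr (Set.compl_subset_compl.mpr h)
    · exact Or.inl (Set.compl_subset_compl.mpr h)
  · rw [Function.Injective.encard_image compl_injective]
    exact hcard

end MedianGraph

open MedianGraph

/-- In a median graph, the normal distance `d_nor` is a metric on the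
vertex set: it vanishes exactly on the diagonal, is symmetric, and satisfies the
triangle inequality. -/
theorem dnor_is_metric {V : Type*} (G : SimpleGraph V) (hG : IsMedianGraph G) :
    (∀ x y : V, dnor G x y = 0 ↔ x = y) ∧
    (∀ x y : V, dnor G x y = dnor G y x) ∧
    (∀ x y z : V, dnor G x z ≤ dnor G x y + dnor G y z) := by
  refine ⟨fun x y => ⟨?_, ?_⟩, fun x y => ?_, fun x y z => ?_⟩
  · -- dnor = 0 → x = y
    intro h0
    by_contra hxy
    obtain ⟨h, hhs, hxh, hyh⟩ := exists_sep hG hxy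
    have h1 : 1 ≤ dnor G x y :=
      le_dnor hG ⟨{h}, by simp [Hset, hhs, hxh, hyh], Set.pairwise_singleton _ _, by simp⟩
    omega
  · -- x = y → dnor = 0
    rintro rfl
    have hS : {n : ℕ | ∃ c : Set (Set V), c ⊆ Hset G x x ∧ IsChain (· ⊆ ·) c ∧
        c.encard = n} = {0} := by
      ext n
      simp only [Set.mem_setOf_eq, Set.mem_singleton_iff]
      constructor
      · rintro ⟨c, hsub, _, hcard⟩
        have hce : c = ∅ := by
          ext h
          simp only [Set.mem_empty_iff_false, iff_false]
          intro hh
          obtain ⟨_, hxh, hxh'⟩ := hsub hh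
          exact hxh' hxh
        rw [hce, Set.encard_empty] at hcard
        exact_mod_cast hcard.symm
      · rintro rfl
        exact zero_mem_chainSet x x
    rw [dnor, hS, csSup_singleton]
  · -- symmetry
    have h1 := chainSet_symm (G := G) x y
    have h2 := chainSet_symm (G := G) y x
    rw [dnor, dnor, Set.Subset.antisymm h1 h2]
  · -- triangle inequality
    obtain ⟨c, hsub, hch, hcard⟩ := dnor_mem hG x z
    set c₁ : Set (Set V) := {h | h ∈ c ∧ y ∉ h} with hc₁
    set c₂ : Set (Set V) := {h | h ∈ c ∧ y ∈ h} with hc₂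
    have hunion : c = c₁ ∪ c₂ := by
      ext h; by_cases hy : y ∈ h <;> simp [hc₁, hc₂, hy]
    have hdisj : Disjoint c₁ c₂ := by
      rw [Set.disjoint_left]
      rintro h ⟨_, h1⟩ ⟨_, h2⟩
      exact h1 h2
    have hsum : c₁.encard + c₂.encard = (dnor G x z : ℕ∞) := by
      rw [← Set.encard_union_eq hdisj, ← hunion, hcard]
    have hfin1 : c₁.encard ≠ ⊤ := by
      intro h
      rw [h] at hsum
      simp at hsum
    have hfin2 : c₂.encard ≠ ⊤ := by
      intro h
      rw [h] at hsum
      simp [add_comm] at hsum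
    lift c₁.encard to ℕ using hfin1 with n₁ hn₁
    lift c₂.encard to ℕ using hfin2 with n₂ hn₂
    have hle1 : n₁ ≤ dnor G x y := by
      refine le_dnor hG ⟨c₁, ?_, hch.mono (fun h hh => hh.1), hn₁.symm⟩
      rintro h ⟨hh, hyh⟩
      obtain ⟨hhs, hxh, _⟩ := hsub hh
      exact ⟨hhs, hxh, hyh⟩
    have hle2 : n₂ ≤ dnor G y z := by
      refine le_dnor hG ⟨c₂, ?_, hch.mono (fun h hh => hh.1), hn₂.symm⟩
      rintro h ⟨hh, hyh⟩
      obtain ⟨hhs, _, hzh⟩ := hsub hh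
      exact ⟨hhs, hyh, hzh⟩
    have heq : dnor G x z = n₁ + n₂ := by
      exact_mod_cast hsum.symm
    omega
end

section
/- Let V be the vertex set of a median graph. For every x ∈ V and every n ∈ ℕ, the normal ball B_nor(x,n) = {y ∈ V : d_nor(x,y) ≤ n} is a convex subset of V. -/
open scoped ENNReal

open MedianGraph

namespace MedianGraph

theorem chain_encard_le (G : SimpleGraph V) (hG : IsMedianGraph G) (x y : V)
    {c : Set (Set V)} (hc : c ⊆ Hset G x y) (hch : IsChain (· ⊆ ·) c) :
    c.encard ≤ (G.dist x y : ℕ∞) := by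
  classical
  obtain ⟨p, hp⟩ := hG.1.exists_walk_length_eq_dist x y
  rw [← hp]
  set f : Set V → ℕ := fun h => sInf {j | p.getVert j ∉ h} with hf
  have hne : ∀ h ∈ c, {j | p.getVert j ∉ h}.Nonempty := by
    intro h hh
    exact ⟨p.length, by simpa [Set.mem_setOf_eq, p.getVert_length] using (hc hh).2.2⟩
  have hfmem : ∀ h ∈ c, p.getVert (f h) ∉ h := fun h hh => Nat.sInf_mem (hne h hh)
  have hf1 : ∀ h ∈ c, 1 ≤ f h := by
    intro h hh
    by_contra hlt
    have h0 : f h = 0 := by omega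
    have := hfmem h hh
    rw [h0, p.getVert_zero] at this
    exact this (hc hh).2.1
  have hfle : ∀ h ∈ c, f h ≤ p.length := by
    intro h hh
    exact Nat.sInf_le (by simpa [Set.mem_setOf_eq, p.getVert_length] using (hc hh).2.2)
  -- key sub-claim: if h, k ∈ c, f h = f k, h ⊆ k, then k ⊆ h
  have key : ∀ h ∈ c, ∀ k ∈ c, f h = f k → h ⊆ k → k ⊆ h := by
    intro h hh k hk hfk hsub w hw
    by_contra hwh
    set i := f h with hi
    have hi1 : 1 ≤ i := hf1 h hh
    have hile : i ≤ p.length := hfle h hh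
    set u := p.getVert (i - 1) with hu
    set v := p.getVert i with hv
    have huh : u ∈ h := by
      by_contra hcon
      have hle : f h ≤ i - 1 := Nat.sInf_le (show i - 1 ∈ {j | p.getVert j ∉ h} from hcon)
      rw [← hi] at hle
      omega
    have huk : u ∈ k := hsub huh
    have hvh : v ∉ h := hfmem h hh
    have hvk : v ∉ k := by
      have := hfmem k hk
      rwa [← hfk] at this
    have hadj : G.Adj u v := by
      have := p.adj_getVert_succ (i := i - 1) (by omega)
      simpa [hu, hv, Nat.sub_add_cancel hi1] using this
    have hduv : G.dist u v = 1 := SimpleGraph.dist_eq_one_iff_adj.mpr hadj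
    obtain ⟨m, ⟨h1, h2, h3⟩, -⟩ := hG.2 u v w
    have h1' : G.dist u m + G.dist m v = 1 := by
      have := h1
      simp only [itv, Set.mem_setOf_eq] at this
      omega
    rcases Nat.add_eq_one_iff.mp h1' with ⟨hd0, -⟩ | ⟨-, hd0⟩
    · -- m = u
      have hmu : m = u := (hG.1.dist_eq_zero_iff.mp hd0).symm
      subst hmu
      -- m ∈ itv v w, and v, w ∈ hᶜ, so u ∈ hᶜ, contradiction
      exact ((hc hh).1.2.2.2 v hvh w hwh h2) huh
    · -- m = v
      have hmv : m = v := hG.1.dist_eq_zero_iff.mp hd0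
      subst hmv
      -- v ∈ itv w u, and w, u ∈ k, so v ∈ k, contradiction
      exact hvk ((hc hk).1.2.2.1 w hw u huk h3)
  have hinj : Set.InjOn f c := by
    intro h hh k hk hfk
    by_cases heq : h = k
    · exact heq
    · rcases hch hh hk heq with hsub | hsub
      · exact le_antisymm hsub (key h hh k hk hfk hsub)
      · exact le_antisymm (key k hk h hh hfk.symm hsub) hsub
  calc c.encard = (f '' c).encard := (hinj.encard_image).symm
    _ ≤ (Set.Icc 1 p.length).encard := by
        apply Set.encard_mono
        rintro - ⟨h, hh, rfl⟩
        exact ⟨hf1 h hh, hfle h hh⟩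
    _ = (p.length : ℕ∞) := by
        rw [← Finset.coe_Icc, Set.encard_coe_eq_coe_finsetCard, Nat.card_Icc]
        norm_cast

theorem dnor_set_bddAbove (G : SimpleGraph V) (hG : IsMedianGraph G) (x y : V) :
    BddAbove {n : ℕ | ∃ c : Set (Set V), c ⊆ Hset G x y ∧ IsChain (· ⊆ ·) c ∧ c.encard = n} := by
  refine ⟨G.dist x y, ?_⟩
  rintro m ⟨c, hc, hch, hcard⟩
  have := chain_encard_le G hG x y hc hch
  rw [hcard] at this
  exact_mod_cast this


end MedianGraph

/-- In a median graph, every normal ball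
`B_nor(x,n) = {y : d_nor(x,y) ≤ n}` is convex. -/
theorem normal_ball_convex {V : Type*} (G : SimpleGraph V) (hG : IsMedianGraph G)
    (x : V) (n : ℕ) :
    Cvx G {y : V | dnor G x y ≤ n} := by
  intro a ha b hb z hz
  simp only [Set.mem_setOf_eq] at ha hb ⊢
  unfold dnor
  refine csSup_le ⟨0, ∅, Set.empty_subset _, IsChain.empty, by simp⟩ ?_
  rintro m ⟨c, hc, hch, hcard⟩
  -- no halfspace in c contains both a and b
  have hnotboth : ∀ h ∈ c, ¬(a ∈ h ∧ b ∈ h) := by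
    rintro h hh ⟨hah, hbh⟩
    exact (hc hh).2.2 ((hc hh).1.2.2.1 a hah b hbh hz)
  have hsplit : (∀ h ∈ c, a ∉ h) ∨ (∀ h ∈ c, b ∉ h) := by
    by_contra hcon
    push_neg at hcon
    obtain ⟨⟨h, hh, hah⟩, k, hk, hbk⟩ := hcon
    have hne : h ≠ k := fun heq => hnotboth h hh ⟨hah, heq ▸ hbk⟩
    rcases hch hh hk hne with hsub | hsub
    · exact hnotboth k hk ⟨hsub hah, hbk⟩
    · exact hnotboth h hh ⟨hah, hsub hbk⟩
  rcases hsplit with hA | hB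
  · have hca : c ⊆ Hset G x a := fun h hh => ⟨(hc hh).1, (hc hh).2.1, hA h hh⟩
    have : m ≤ dnor G x a := le_csSup (dnor_set_bddAbove G hG x a) ⟨c, hca, hch, hcard⟩
    omega
  · have hcb : c ⊆ Hset G x b := fun h hh => ⟨(hc hh).1, (hc hh).2.1, hB h hh⟩
    have : m ≤ dnor G x b := le_csSup (dnor_set_bddAbove G hG x b) ⟨c, hcb, hch, hcard⟩
    omega
end

section
/- Let V be the vertex set of a median graph, and fix x₀, x ∈ V and an integer n ≥ 1 with d_nor(x₀,x) ≥ n; let v and H_n be as defined. Then for every w ∈ [x₀,x] the following are equivalent: (1) d_nor(x₀,w) = n; (2) w ∈ [x₀,v] and there exists h ∈ H_n with w ∉ h. -/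
open scoped ENNReal

open MedianGraph

/-!
A chain of halfspaces separating `x₀` from a point has a largest member `g`, and every member of
the chain then separates `x₀` from any point outside `g`. Hence for `w ∈ [x₀,x]` outside `h`, the
halfspaces of `H(x₀,x)` inside `h` separate `x₀` from `w`, which gives `d_nor(x₀,w) ≥ n` when
`h ∈ H_n`; conversely, the largest member of a chain realising `d_nor(x₀,w) = n` lies in `H_n`.
For `w ∈ [x₀,v]`, let `m` be the median of `w, v, x`. Being convex, the largest halfspace of a
chain separating `x₀` from `m ∈ [w,v]` misses `w` or `v`, so `d_nor(x₀,m) ≤ n`; since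
`v ∈ [x₀,m]`, maximality of `v` forces `m = v`, that is, `v ∈ [w,x]`.
-/

theorem IsChain.exists_forall_le_of_finite {α : Type*} [Preorder α] {c : Set α}
    (hc : IsChain (· ≤ ·) c) (hfin : c.Finite) (hne : c.Nonempty) : ∃ g ∈ c, ∀ k ∈ c, k ≤ g := by
  obtain ⟨g, hg⟩ := hfin.exists_maximal hne
  exact ⟨g, hg.prop, fun k hk => (hc.total hk hg.prop).elim id (hg.2 hk)⟩

namespace MedianGraph

section ChainHeight

variable {α : Type*} {S T : Set (Set α)}

def chainSizes (S : Set (Set α)) : Set ℕ :=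
  {m | ∃ c ⊆ S, IsChain (· ⊆ ·) c ∧ c.encard = m}

/-- The `ℕ`-valued chain height used by `dnor` and `Hn`; it is `0` when chains in `S` have
unbounded size. -/
noncomputable def natChainHeight (S : Set (Set α)) : ℕ :=
  sSup (chainSizes S)

theorem zero_mem_chainSizes (S : Set (Set α)) : 0 ∈ chainSizes S :=
  ⟨∅, Set.empty_subset S, IsChain.empty, Set.encard_empty⟩

theorem chainSizes_mono (hST : S ⊆ T) : chainSizes S ⊆ chainSizes T :=
  fun _ ⟨c, hcS, hc, hcard⟩ => ⟨c, hcS.trans hST, hc, hcard⟩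

theorem bddAbove_chainSizes_of_pos (hS : 0 < natChainHeight S) : BddAbove (chainSizes S) := by
  by_contra hunb
  rw [natChainHeight, csSup_of_not_bddAbove hunb, csSup_empty] at hS
  exact hS.ne rfl

theorem natChainHeight_mono (hST : S ⊆ T) (hT : BddAbove (chainSizes T)) :
    natChainHeight S ≤ natChainHeight T :=
  csSup_le_csSup hT ⟨0, zero_mem_chainSizes S⟩ (chainSizes_mono hST)

theorem le_natChainHeight {c : Set (Set α)} {m : ℕ} (hS : BddAbove (chainSizes S)) (hcS : c ⊆ S)
    (hc : IsChain (· ⊆ ·) c) (hcard : c.encard = m) : m ≤ natChainHeight S :=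
  le_csSup hS ⟨c, hcS, hc, hcard⟩

theorem exists_isChain_encard_eq_natChainHeight (hS : BddAbove (chainSizes S)) :
    ∃ c ⊆ S, IsChain (· ⊆ ·) c ∧ c.encard = natChainHeight S :=
  Nat.sSup_mem ⟨0, zero_mem_chainSizes S⟩ hS

end ChainHeight

variable {V : Type*} {G : SimpleGraph V}

theorem mem_itv_comm {x y z : V} : z ∈ itv G x y ↔ z ∈ itv G y x := by
  change G.dist x z + G.dist z y = G.dist x y ↔ G.dist y z + G.dist z x = G.dist y x
  rw [G.dist_comm (u := y) (v := z), G.dist_comm (u := z) (v := x), G.dist_comm (u := y),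
    add_comm]

theorem mem_itv_trans (hconn : G.Connected) {a x v m : V} (hv : v ∈ itv G a x)
    (hm : m ∈ itv G v x) : m ∈ itv G a x ∧ v ∈ itv G a m := by
  have hv' : G.dist a v + G.dist v x = G.dist a x := hv
  have hm' : G.dist v m + G.dist m x = G.dist v x := hm
  have t₁ : G.dist a m ≤ G.dist a v + G.dist v m := hconn.dist_triangle
  have t₂ : G.dist a x ≤ G.dist a m + G.dist m x := hconn.dist_triangle
  exact ⟨show G.dist a m + G.dist m x = G.dist a x by omega,
    show G.dist a v + G.dist v m = G.dist a m by omega⟩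

theorem dnor_eq_natChainHeight (a b : V) : dnor G a b = natChainHeight (Hset G a b) := rfl

theorem mem_Hn_iff {x₀ x : V} {n : ℕ} {h : Set V} :
    h ∈ Hn G x₀ x n ↔ h ∈ Hset G x₀ x ∧ natChainHeight {k | k ∈ Hset G x₀ x ∧ k ⊆ h} = n :=
  Iff.rfl

theorem Hset_subset_of_mem_itv {a b w : V} (hw : w ∈ itv G a b) : Hset G a w ⊆ Hset G a b :=
  fun _ ⟨hh, ha, hwh⟩ => ⟨hh, ha, fun hb => hwh (hh.2.2.1 a ha b hb hw)⟩

theorem setOf_subset_Hset_of_not_mem {a b z : V} {g : Set V} (hz : z ∉ g) :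
    {k | k ∈ Hset G a b ∧ k ⊆ g} ⊆ Hset G a z :=
  fun _ ⟨⟨hk, ha, _⟩, hkg⟩ => ⟨hk, ha, fun hzk => hz (hkg hzk)⟩

theorem bddAbove_chainSizes_Hset_of_mem_itv {a b w : V} (hw : w ∈ itv G a b)
    (hb : BddAbove (chainSizes (Hset G a b))) : BddAbove (chainSizes (Hset G a w)) :=
  hb.mono (chainSizes_mono (Hset_subset_of_mem_itv hw))

theorem dnor_mono {a b w : V} (hw : w ∈ itv G a b) (hb : BddAbove (chainSizes (Hset G a b))) :
    dnor G a w ≤ dnor G a b :=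
  natChainHeight_mono (Hset_subset_of_mem_itv hw) hb

theorem dnor_le_max_of_mem_itv {a w v m : V} (hm : m ∈ itv G w v)
    (hbw : BddAbove (chainSizes (Hset G a w))) (hbv : BddAbove (chainSizes (Hset G a v))) :
    dnor G a m ≤ max (dnor G a w) (dnor G a v) := by
  refine csSup_le ⟨0, zero_mem_chainSizes _⟩ ?_
  rintro k ⟨c, hcS, hc, hcard⟩
  rcases c.eq_empty_or_nonempty with rfl | hne
  · rw [Set.encard_empty] at hcard
    exact (Nat.cast_eq_zero.mp hcard.symm).trans_le (Nat.zero_le _)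
  obtain ⟨g, hg, htop⟩ := hc.exists_forall_le_of_finite (Set.finite_of_encard_eq_coe hcard) hne
  have hcg : c ⊆ {k | k ∈ Hset G a m ∧ k ⊆ g} := fun k hk => ⟨hcS hk, htop k hk⟩
  obtain ⟨⟨-, -, hg_cvx, -⟩, -, hmg⟩ := hcS hg
  have hwv : w ∉ g ∨ v ∉ g := by
    by_contra! hwv
    exact hmg (hg_cvx w hwv.1 v hwv.2 hm)
  rcases hwv with hwg | hvg
  · exact (le_natChainHeight hbw (hcg.trans (setOf_subset_Hset_of_not_mem hwg)) hc hcard).trans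
      (le_max_left _ _)
  · exact (le_natChainHeight hbv (hcg.trans (setOf_subset_Hset_of_not_mem hvg)) hc hcard).trans
      (le_max_right _ _)

theorem mem_itv_of_dnor_le (hG : IsMedianGraph G) {x₀ x v w : V} {n : ℕ}
    (hb : BddAbove (chainSizes (Hset G x₀ x))) (hv₁ : v ∈ itv G x₀ x) (hv₂ : dnor G x₀ v ≤ n)
    (hv₃ : ∀ u ∈ itv G x₀ x, dnor G x₀ u ≤ n → G.dist x₀ u ≤ G.dist x₀ v)
    (hw : w ∈ itv G x₀ x) (hwn : dnor G x₀ w ≤ n) : w ∈ itv G x₀ v := by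
  obtain ⟨hconn, hmed⟩ := hG
  obtain ⟨m, ⟨hm_wv, hm_vx, hm_xw⟩, -⟩ := hmed w v x
  obtain ⟨hm, hvm⟩ := mem_itv_trans hconn hv₁ hm_vx
  have hmn : dnor G x₀ m ≤ n :=
    (dnor_le_max_of_mem_itv hm_wv (bddAbove_chainSizes_Hset_of_mem_itv hw hb)
      (bddAbove_chainSizes_Hset_of_mem_itv hv₁ hb)).trans (max_le hwn hv₂)
  have hdist : G.dist x₀ v + G.dist v m = G.dist x₀ m := hvm
  have hv_eq : v = m := hconn.dist_eq_zero_iff.mp (by have := hv₃ m hm hmn; omega)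
  subst hv_eq
  exact (mem_itv_trans hconn hw (mem_itv_comm.mp hm_xw)).2

theorem exists_mem_Hn_not_mem {x₀ x w : V} {n : ℕ} (hn : 1 ≤ n)
    (hb : BddAbove (chainSizes (Hset G x₀ x))) (hw : w ∈ itv G x₀ x) (hwn : dnor G x₀ w = n) :
    ∃ h ∈ Hn G x₀ x n, w ∉ h := by
  have hbw := bddAbove_chainSizes_Hset_of_mem_itv hw hb
  obtain ⟨c, hcS, hc, hcard⟩ := exists_isChain_encard_eq_natChainHeight hbw
  rw [← dnor_eq_natChainHeight, hwn] at hcard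
  have hne : c.Nonempty :=
    Set.nonempty_of_encard_ne_zero (by rw [hcard]; exact Nat.cast_ne_zero.mpr (by omega))
  obtain ⟨g, hg, htop⟩ := hc.exists_forall_le_of_finite (Set.finite_of_encard_eq_coe hcard) hne
  have hwg : w ∉ g := (hcS hg).2.2
  have hsub := setOf_subset_Hset_of_not_mem (G := G) (a := x₀) (b := x) hwg
  refine ⟨g, mem_Hn_iff.mpr ⟨Hset_subset_of_mem_itv hw (hcS hg), le_antisymm ?_ ?_⟩, hwg⟩
  · exact (natChainHeight_mono hsub hbw).trans hwn.le
  · exact le_natChainHeight (hbw.mono (chainSizes_mono hsub))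
      (fun k hk => ⟨Hset_subset_of_mem_itv hw (hcS hk), htop k hk⟩) hc hcard

theorem le_dnor_of_mem_Hn {x₀ x w : V} {n : ℕ} {h : Set V}
    (hbw : BddAbove (chainSizes (Hset G x₀ w))) (hh : h ∈ Hn G x₀ x n) (hwh : w ∉ h) :
    n ≤ dnor G x₀ w := by
  rw [← (mem_Hn_iff.mp hh).2]
  exact natChainHeight_mono (setOf_subset_Hset_of_not_mem hwh) hbw

end MedianGraph

/-- In a median graph, fix `x₀, x`, an integer `n ≥ 1` with
`d_nor(x₀,x) ≥ n`, and let `v` be the point of `[x₀,x] ∩ B_nor(x₀,n)` at maximal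
distance from `x₀`. Then for every `w ∈ [x₀,x]`: `d_nor(x₀,w) = n` if and only if
`w ∈ [x₀,v]` and there exists `h ∈ H_n` with `w ∉ h`. -/
theorem normal_sphere_char {V : Type*} (G : SimpleGraph V) (hG : IsMedianGraph G)
    (x₀ x : V) (n : ℕ) (hn : 1 ≤ n) (hd : n ≤ dnor G x₀ x)
    (v : V) (hv₁ : v ∈ itv G x₀ x) (hv₂ : dnor G x₀ v ≤ n)
    (hv₃ : ∀ w ∈ itv G x₀ x, dnor G x₀ w ≤ n → G.dist x₀ w ≤ G.dist x₀ v) :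
    ∀ w ∈ itv G x₀ x,
      (dnor G x₀ w = n ↔ w ∈ itv G x₀ v ∧ ∃ h ∈ Hn G x₀ x n, w ∉ h) := by
  have hb : BddAbove (chainSizes (Hset G x₀ x)) :=
    bddAbove_chainSizes_of_pos (lt_of_lt_of_le hn hd)
  intro w hw
  constructor
  · intro hwn
    exact ⟨mem_itv_of_dnor_le hG hb hv₁ hv₂ hv₃ hw hwn.le, exists_mem_Hn_not_mem hn hb hw hwn⟩
  · rintro ⟨hwv, h, hh, hwh⟩
    have hbv := bddAbove_chainSizes_Hset_of_mem_itv hv₁ hb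
    exact le_antisymm ((dnor_mono hwv hbv).trans hv₂)
      (le_dnor_of_mem_Hn (bddAbove_chainSizes_Hset_of_mem_itv hwv hbv) hh hwh)
end

section
/- Let (X, ρ, μ) satisfy the stated coarse median axioms with constants K, H₀, λ₀, γ, and set L₁(r) = (K+1)r + Kλ₀ + γ + 2H₀. Then for every r ≥ 0, all a, b ∈ X, and every x ∈ [a,b]_{λ₀}, one has [a,x]_r ⊆ [a,b]_{L₁(r)}. -/
/-- The coarse interval `[a,b]_r` with respect to a ternary operation `μ`:
the set of `z` with `dist (μ a b z) z ≤ r`. -/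
def coarseInterval {X : Type*} [MetricSpace X] (μ : X → X → X → X) (a b : X) (r : ℝ) : Set X :=
  {z | dist (μ a b z) z ≤ r}

/-- Under the stated coarse median axioms with constants `K, H₀, lam₀, γ`,
setting `L₁(r) = (K+1)r + K·lam₀ + γ + 2H₀`, for every `r ≥ 0`, all `a, b ∈ X` and every
`x ∈ [a,b]_{lam₀}` one has `[a,x]_r ⊆ [a,b]_{L₁(r)}`. -/
theorem coarse_interval_nested {X : Type*} [MetricSpace X] (μ : X → X → X → X)
    (K H₀ lam₀ γ : ℝ) (hK : 1 ≤ K) (hH₀ : 0 ≤ H₀) (hlam₀ : 0 ≤ lam₀) (hγ : 0 ≤ γ)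
    (hM1 : ∀ a b : X, μ a a b = a)
    (hM2 : ∀ a b c : X, μ a b c = μ a c b ∧ μ a b c = μ b a c ∧ μ a b c = μ b c a ∧
      μ a b c = μ c a b ∧ μ a b c = μ c b a)
    (hC1 : ∀ a b c a' b' c' : X,
      dist (μ a b c) (μ a' b' c') ≤ K * (dist a a' + dist b b' + dist c c') + H₀)
    (hmed : ∀ x y z : X, μ x y z ∈ coarseInterval μ x y lam₀)
    (hM3 : ∀ x y z u v : X,
      dist (μ (μ x y z) u v) (μ (μ x u v) (μ y u v) z) ≤ γ)
    (r : ℝ) (hr : 0 ≤ r) (a b x : X) (hx : x ∈ coarseInterval μ a b lam₀) :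
    coarseInterval μ a x r ⊆ coarseInterval μ a b ((K + 1) * r + K * lam₀ + γ + 2 * H₀) := by
  intro z hz
  simp only [coarseInterval, Set.mem_setOf_eq] at hz hx ⊢
  set m := μ a x z with hm
  -- key distances
  have h1 : dist (μ a b z) (μ a b m) ≤ K * dist z m + H₀ := by
    have := hC1 a b z a b m
    simpa using this
  have hperm : μ m a b = μ a b m := by
    have h := (hM2 m a b).2.2.1
    exact h
  have h2 : dist (μ m a b) (μ a (μ x a b) z) ≤ γ := by
    have := hM3 a x z a b
    rw [hM1 a b] at this
    exact this
  have hx' : μ x a b = μ a b x := (hM2 x a b).2.2.1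
  have h3 : dist (μ a (μ x a b) z) m ≤ K * lam₀ + H₀ := by
    have := hC1 a (μ x a b) z a x z
    have hd : dist (μ x a b) x ≤ lam₀ := by rw [hx']; exact hx
    calc dist (μ a (μ x a b) z) m
        ≤ K * (dist a a + dist (μ x a b) x + dist z z) + H₀ := this
      _ = K * dist (μ x a b) x + H₀ := by simp
      _ ≤ K * lam₀ + H₀ := by nlinarith
  have h4 : dist (μ a b m) m ≤ γ + (K * lam₀ + H₀) := by
    calc dist (μ a b m) m ≤ dist (μ a b m) (μ a (μ x a b) z) + dist (μ a (μ x a b) z) m :=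
          dist_triangle _ _ _
      _ ≤ γ + (K * lam₀ + H₀) := by
          have := h2
          rw [hperm] at this
          have h2' : dist (μ a b m) (μ a (μ x a b) z) ≤ γ := this
          linarith
  have hzm : dist z m = dist m z := dist_comm _ _
  calc dist (μ a b z) z ≤ dist (μ a b z) (μ a b m) + dist (μ a b m) m + dist m z := by
        have := dist_triangle4 (μ a b z) (μ a b m) m z
        linarith
    _ ≤ (K * dist z m + H₀) + (γ + (K * lam₀ + H₀)) + dist m z := by linarith
    _ ≤ (K + 1) * r + K * lam₀ + γ + 2 * H₀ := by
        rw [hzm] at *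
        have hmz : dist m z ≤ r := hz
        nlinarith
end

section
/- For all constants K ≥ 1, H₀ ≥ 0, λ₀ ≥ 0, γ ≥ 0 and every κ > 0 there exist constants α, β ≥ 0, depending only on K, H₀, λ₀, γ and κ, with the following property: whenever (X, ρ, μ) satisfies the stated coarse median axioms with constants K, H₀, λ₀, γ, and a, b, h, m ∈ X and r ≥ 0 satisfy m ∈ [a,h]_{L₂(r,κ)} and h ∈ [a,b]_{L₁(r)} (where L₁(r) = (K+1)r + Kλ₀ + γ + 2H₀ and L₂(r,κ) = (K+1)r + κ + H₀), the point p = μ(m,b,h) satisfies ρ(h,p) ≤ αr + β. -/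
/-- For all constants `K ≥ 1, H₀ ≥ 0, lam₀ ≥ 0, γ ≥ 0` and every `κ > 0`,
there exist `α, β ≥ 0` depending only on these constants such that: whenever `(X, ρ, μ)`
satisfies the stated coarse median axioms with these constants, and `a, b, h, m ∈ X`, `r ≥ 0`
satisfy `m ∈ [a,h]_{L₂(r,κ)}` and `h ∈ [a,b]_{L₁(r)}`, the point `p = μ(m,b,h)` satisfies
`ρ(h,p) ≤ αr + β`. -/
theorem coarse_median_gate (K H₀ lam₀ γ κ : ℝ)
    (hK : 1 ≤ K) (hH₀ : 0 ≤ H₀) (hlam₀ : 0 ≤ lam₀) (hγ : 0 ≤ γ) (hκ : 0 < κ) :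
    ∃ α β : ℝ, 0 ≤ α ∧ 0 ≤ β ∧
      ∀ (X : Type*) [MetricSpace X], ∀ (μ : X → X → X → X),
        (∀ a b : X, μ a a b = a) →
        (∀ a b c : X, μ a b c = μ a c b ∧ μ a b c = μ b a c ∧ μ a b c = μ b c a ∧
          μ a b c = μ c a b ∧ μ a b c = μ c b a) →
        (∀ a b c a' b' c' : X,
          dist (μ a b c) (μ a' b' c') ≤ K * (dist a a' + dist b b' + dist c c') + H₀) →
        (∀ x y z : X, μ x y z ∈ coarseInterval μ x y lam₀) →
        (∀ x y z u v : X,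
          dist (μ (μ x y z) u v) (μ (μ x u v) (μ y u v) z) ≤ γ) →
        ∀ (a b h m : X) (r : ℝ), 0 ≤ r →
          m ∈ coarseInterval μ a h ((K + 1) * r + κ + H₀) →
          h ∈ coarseInterval μ a b ((K + 1) * r + K * lam₀ + γ + 2 * H₀) →
          dist h (μ m b h) ≤ α * r + β := by

  refine ⟨2*K*(K+1), K*(κ + H₀ + K*lam₀ + γ + 2*H₀) + γ + 2*H₀, by positivity, by positivity, ?_⟩
  intro X _ μ hidem hperm hlip _ hfive a b h m r hr hm hh
  simp only [coarseInterval, Set.mem_setOf_eq] at hm hh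
  have hbh : μ h b h = h := by
    rw [(hperm h b h).1, hidem]
  have key : dist (μ (μ a h m) b h) (μ (μ a b h) h m) ≤ γ := by
    have := hfive a h m b h
    rwa [hbh] at this
  have h1 : dist h (μ (μ a b h) h m) ≤ K * dist (μ a b h) h + H₀ := by
    have := hlip h h m (μ a b h) h m
    rw [hidem h m] at this
    simpa [dist_comm] using this
  have h2 : dist (μ (μ a h m) b h) (μ m b h) ≤ K * dist (μ a h m) m + H₀ := by
    have := hlip (μ a h m) b h m b h
    simpa using this
  have tri : dist h (μ m b h) ≤ dist h (μ (μ a b h) h m) +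
      dist (μ (μ a b h) h m) (μ (μ a h m) b h) + dist (μ (μ a h m) b h) (μ m b h) :=
    dist_triangle4 _ _ _ _
  rw [dist_comm (μ (μ a b h) h m)] at tri
  nlinarith [hm, hh, key, h1, h2, tri]
end

section
/- Let X and Y be metric spaces with bounded geometry whose metrics take values in the non-negative integers. If X and Y are quasi-isometric, then ad_X ≈ ad_Y, i.e., the asymptotic dimension functions of X and Y have the same growth type. -/
open scoped ENNReal

open AsdimGrowth

/-! Pulling a cover of `Y` back along a map `g : X → Y` that distorts distances at most
affinely in both directions keeps it uniformly bounded, does not raise its multiplicity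
and shrinks its Lebesgue number at most affinely. Hence `ad_X(t) ≤ ad_Y(αt + β)`, and a
quasi-isometry and its quasi-inverse give the two growth dominations. -/

namespace AsdimGrowth

section Pullback

variable {X Y : Type*} (g : X → Y) {U : Set (Set Y)}

lemma IsCover.preimage (hU : IsCover U) : IsCover (Set.preimage g '' U) := fun x => by
  obtain ⟨u, hu, hxu⟩ := hU (g x)
  exact ⟨g ⁻¹' u, ⟨u, hu, rfl⟩, hxu⟩

variable {dX : X → X → ℝ} {dY : Y → Y → ℝ} {α β : ℝ}

lemma UnifBdd.preimage (hα : 0 ≤ α) (hg : ∀ x x', dX x x' ≤ α * dY (g x) (g x') + β)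
    (hU : UnifBdd dY U) : UnifBdd dX (Set.preimage g '' U) := by
  obtain ⟨R, hR⟩ := hU
  refine ⟨α * R + β, ?_⟩
  rintro _ ⟨u, hu, rfl⟩ a ha b hb
  calc dX a b ≤ α * dY (g a) (g b) + β := hg a b
    _ ≤ α * R + β := by gcongr; exact hR u hu _ ha _ hb

lemma LebGT.preimage (hα : 0 < α) (hg : ∀ x x', dY (g x) (g x') ≤ α * dX x x' + β)
    {t : ℝ} (hU : LebGT dY U (α * t + β)) : LebGT dX (Set.preimage g '' U) t := by
  obtain ⟨l, hl, hUl⟩ := hU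
  refine ⟨(l - β) / α, by rw [lt_div_iff₀ hα]; linarith, fun A hA => ?_⟩
  have hgA : ∀ p ∈ g '' A, ∀ q ∈ g '' A, dY p q ≤ l := by
    rintro _ ⟨a, ha, rfl⟩ _ ⟨b, hb, rfl⟩
    calc dY (g a) (g b) ≤ α * dX a b + β := hg a b
      _ ≤ α * ((l - β) / α) + β := by gcongr; exact hA a ha b hb
      _ = l := by field_simp; ring
  obtain ⟨u, hu, hAu⟩ := hUl (g '' A) hgA
  exact ⟨g ⁻¹' u, ⟨u, hu, rfl⟩, fun a ha => hAu ⟨a, ha, rfl⟩⟩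

lemma mult_preimage_le : mult (Set.preimage g '' U) ≤ mult U := by
  refine iSup_le fun x => le_trans ?_ (le_iSup (fun y => {u | u ∈ U ∧ y ∈ u}.encard) (g x))
  refine le_trans (Set.encard_le_encard ?_) (Set.encard_image_le (Set.preimage g) _)
  rintro _ ⟨⟨u, hu, rfl⟩, hxu⟩
  exact ⟨u, ⟨hu, hxu⟩, rfl⟩

lemma adFun_le_adFun_affine (hα : 0 < α)
    (hup : ∀ x x', dY (g x) (g x') ≤ α * dX x x' + β)
    (hdown : ∀ x x', dX x x' ≤ α * dY (g x) (g x') + β) (t : ℝ) :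
    adFun dX t ≤ adFun dY (α * t + β) := by
  refine tsub_le_tsub_right (le_sInf ?_) 1
  rintro _ ⟨U, hcov, hbdd, hleb, rfl⟩
  exact sInf_le_of_le ⟨_, hcov.preimage g, hbdd.preimage g hα.le hdown,
    hleb.preimage g hα hup, rfl⟩ (mult_preimage_le g)

end Pullback

lemma adFun_mono {X : Type*} (d : X → X → ℝ) : Monotone (adFun d) := by
  intro s t hst
  refine tsub_le_tsub_right (sInf_le_sInf ?_) 1
  rintro m ⟨U, hcov, hbdd, ⟨l, hl, hUl⟩, hm⟩
  exact ⟨U, hcov, hbdd, ⟨l, hst.trans_lt hl, hUl⟩, hm⟩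

lemma FDom.of_le_comp_affine {f g : ℝ → ℝ≥0∞} (hg : Monotone g) {α β : ℝ}
    (hfg : ∀ t, f t ≤ g (α * t + β)) : FDom f g := by
  refine ⟨⌈α⌉₊ + ⌈β⌉₊ + 1, fun t ht => ?_⟩
  set k : ℕ := ⌈α⌉₊ + ⌈β⌉₊ + 1
  have hαk : α ≤ k := (Nat.le_ceil α).trans (by norm_cast; omega)
  have hβk : β ≤ k := (Nat.le_ceil β).trans (by norm_cast; omega)
  have ht0 : 0 ≤ t := k.cast_nonneg.trans ht.le
  have hk1 : (1 : ℝ≥0∞) ≤ k := by norm_cast; omega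
  calc f t ≤ g (α * t + β) := hfg t
    _ ≤ g (k * t + k) := hg (by gcongr)
    _ ≤ k * g (k * t + k) + k := le_self_add.trans' (le_mul_of_one_le_left' hk1)

lemma fDom_adFunE_of_affine {X Y : Type*} {dX : X → X → ℝ} {dY : Y → Y → ℝ} (g : X → Y)
    {α β : ℝ} (hα : 0 < α) (hup : ∀ x x', dY (g x) (g x') ≤ α * dX x x' + β)
    (hdown : ∀ x x', dX x x' ≤ α * dY (g x) (g x') + β) :
    FDom (adFunE dX) (adFunE dY) :=
  FDom.of_le_comp_affine (ENat.toENNReal_mono.comp (adFun_mono dY))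
    fun t => ENat.toENNReal_le.2 (adFun_le_adFun_affine g hα hup hdown t)

end AsdimGrowth

lemma le_mul_add_mul_of_div_sub_le {a b lam c : ℝ} (hlam : 0 < lam) (h : a / lam - c ≤ b) :
    a ≤ lam * b + lam * c := by
  rw [div_sub' hlam.ne', div_le_iff₀ hlam] at h
  linarith

theorem adFun_qi_invariant_general {X Y : Type*} [MetricSpace X] [MetricSpace Y]
    (F : X → Y) (lam c : ℝ) (hlam : 1 ≤ lam) (hc : 0 ≤ c)
    (hlower : ∀ x x' : X, dist x x' / lam - c ≤ dist (F x) (F x'))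
    (hupper : ∀ x x' : X, dist (F x) (F x') ≤ lam * dist x x' + c)
    (hdense : ∀ y : Y, ∃ x : X, dist y (F x) ≤ c) :
    FEquiv (adFunE (fun a b : X => dist a b)) (adFunE (fun a b : Y => dist a b)) := by
  have hlam0 : 0 < lam := by linarith
  have hc_le : c ≤ lam * c := le_mul_of_one_le_left hc hlam
  have hFdown x x' := le_mul_add_mul_of_div_sub_le hlam0 (hlower x x')
  choose G hG using hdense
  have hFG y y' : dist y y' ≤ dist (F (G y)) (F (G y')) + 2 * c ∧
      dist (F (G y)) (F (G y')) ≤ dist y y' + 2 * c := by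
    have := dist_triangle4 y (F (G y)) (F (G y')) y'
    have := dist_triangle4 (F (G y)) y y' (F (G y'))
    constructor <;> linarith [hG y, hG y', dist_comm y (F (G y)), dist_comm y' (F (G y'))]
  refine ⟨fDom_adFunE_of_affine F (β := lam * c) hlam0 (fun x x' => ?_) hFdown,
    fDom_adFunE_of_affine G (β := 3 * (lam * c)) hlam0 (fun y y' => ?_) (fun y y' => ?_)⟩
  · linarith [hupper x x']
  · nlinarith [hFdown (G y) (G y'), hFG y y']
  · linarith [hupper (G y) (G y'), hFG y y']

/-- Let `X` and `Y` be metric spaces with bounded geometry whose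
metrics take values in the non-negative integers. If `X` and `Y` are quasi-isometric,
then their asymptotic dimension functions have the same growth type. -/
theorem adFun_qi_invariant {X Y : Type*} [MetricSpace X] [MetricSpace Y]
    (hintX : ∀ x x' : X, ∃ n : ℕ, dist x x' = (n : ℝ))
    (hintY : ∀ y y' : Y, ∃ n : ℕ, dist y y' = (n : ℝ))
    (hbgX : ∀ r : ℝ, 0 < r → ∃ N : ℕ, ∀ x : X, {x' : X | dist x x' ≤ r}.encard ≤ N)
    (hbgY : ∀ r : ℝ, 0 < r → ∃ N : ℕ, ∀ y : Y, {y' : Y | dist y y' ≤ r}.encard ≤ N)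
    (F : X → Y) (lam c : ℝ) (hlam : 1 ≤ lam) (hc : 0 ≤ c)
    (hlower : ∀ x x' : X, dist x x' / lam - c ≤ dist (F x) (F x'))
    (hupper : ∀ x x' : X, dist (F x) (F x') ≤ lam * dist x x' + c)
    (hdense : ∀ y : Y, ∃ x : X, dist y (F x) ≤ c) :
    FEquiv (adFunE (fun a b : X => dist a b)) (adFunE (fun a b : Y => dist a b)) :=
  adFun_qi_invariant_general F lam c hlam hc hlower hupper hdense
end
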